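/- arXiv:1905.03773 — 3 statements merged into one kernel-verified Lean document; each statement's English description precedes it below -/
import Mathlib

section
/- Let X and Y be independent, identically distributed nonnegative random variables with P(X > v) = 1/(1 + v) for every v ≥ 0. Then the expected second-highest value among the three values 1, X, Y, namely E[max(min(1, X), min(1, Y), min(X, Y))], equals 2·ln 2 (= ln 4). (This is the revenue of the Vickrey auction when only the slanted equal-revenue bidder is duplicated in Hartline–Roughgarden's example; the ratio 2/ln 4 ≈ 1.44 is the largest known gap for the Vickrey auction with a single duplicate.) -/
/-!
By the layer-cake formula `E Z = ∫₀^∞ P(Z > t) dt`. Write `p = 1/(1+t)`. For `t < 1` the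
second-highest of `1, X, Y` exceeds `t` iff `max X Y` does, which by independence has
probability `2p - p²`; for `t ≥ 1` it exceeds `t` iff `min X Y` does, with probability `p²`.
Hence `E Z = ∫₀¹ (2p - p²) dt + ∫₁^∞ p² dt = (2 log 2 - 1/2) + 1/2`.
-/

open MeasureTheory ProbabilityTheory Set Filter

lemma lt_max_min_iff_of_lt {c t : ℝ} (x y : ℝ) (ht : t < c) :
    t < max (min c x) (max (min c y) (min x y)) ↔ t < x ∨ t < y := by
  simp only [lt_max_iff, lt_min_iff]
  tauto

lemma lt_max_min_iff_of_le {c t : ℝ} (x y : ℝ) (ht : c ≤ t) :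
    t < max (min c x) (max (min c y) (min x y)) ↔ t < x ∧ t < y := by
  simp only [lt_max_iff, lt_min_iff]
  have : ¬ t < c := not_lt.2 ht
  tauto

namespace ProbabilityTheory.IndepFun

variable {Ω : Type*} [MeasurableSpace Ω] {μ : Measure Ω} {X Y : Ω → ℝ}

lemma measureReal_lt_and_lt (h : IndepFun X Y μ) (t : ℝ) :
    μ.real {ω | t < X ω ∧ t < Y ω} = μ.real {ω | t < X ω} * μ.real {ω | t < Y ω} := by
  have := h.measure_inter_preimage_eq_mul (Ioi t) (Ioi t) measurableSet_Ioi measurableSet_Ioi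
  simp only [measureReal_def, ofPred_and, ← ENNReal.toReal_mul]
  exact congrArg ENNReal.toReal this

lemma measureReal_lt_or_lt [IsFiniteMeasure μ] (h : IndepFun X Y μ) (hY : Measurable Y)
    (t : ℝ) :
    μ.real {ω | t < X ω ∨ t < Y ω} = μ.real {ω | t < X ω} + μ.real {ω | t < Y ω}
      - μ.real {ω | t < X ω} * μ.real {ω | t < Y ω} := by
  have := measureReal_union_add_inter (μ := μ) (s := {ω | t < X ω}) (hY measurableSet_Ioi)
  rw [← h.measureReal_lt_and_lt, ofPred_or, ofPred_and]
  exact eq_sub_of_add_eq this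

lemma measureReal_lt_max_min_of_lt [IsFiniteMeasure μ] (h : IndepFun X Y μ) (hY : Measurable Y)
    {c t : ℝ} (ht : t < c) :
    μ.real {ω | t < max (min c (X ω)) (max (min c (Y ω)) (min (X ω) (Y ω)))}
      = μ.real {ω | t < X ω} + μ.real {ω | t < Y ω}
        - μ.real {ω | t < X ω} * μ.real {ω | t < Y ω} := by
  simp only [lt_max_min_iff_of_lt _ _ ht]
  exact h.measureReal_lt_or_lt hY t

lemma measureReal_lt_max_min_of_le (h : IndepFun X Y μ) {c t : ℝ} (ht : c ≤ t) :
    μ.real {ω | t < max (min c (X ω)) (max (min c (Y ω)) (min (X ω) (Y ω)))}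
      = μ.real {ω | t < X ω} * μ.real {ω | t < Y ω} := by
  simp only [lt_max_min_iff_of_le _ _ ht]
  exact h.measureReal_lt_and_lt t

end ProbabilityTheory.IndepFun

lemma hasDerivAt_neg_inv_one_add {t : ℝ} (ht : 1 + t ≠ 0) :
    HasDerivAt (fun s : ℝ => -(1 + s)⁻¹) ((1 + t)⁻¹ ^ 2) t := by
  refine (((hasDerivAt_id t).const_add 1).inv ht).neg.congr_deriv ?_
  simp [inv_pow, neg_div]

lemma tendsto_neg_inv_one_add_atTop : Tendsto (fun s : ℝ => -(1 + s)⁻¹) atTop (nhds 0) := by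
  simpa using (tendsto_inv_atTop_zero.comp (tendsto_atTop_add_const_left _ (1 : ℝ) tendsto_id)).neg

lemma integral_one_add_inv_sq {a b : ℝ} (ha : -1 < a) (hab : a ≤ b) :
    ∫ t in a..b, (1 + t)⁻¹ ^ 2 = (1 + a)⁻¹ - (1 + b)⁻¹ := by
  have hpos : ∀ t ∈ uIcc a b, 0 < 1 + t := fun t ht => by
    rw [uIcc_of_le hab] at ht; linarith [ht.1]
  rw [intervalIntegral.integral_eq_sub_of_hasDerivAt
    (fun t ht => hasDerivAt_neg_inv_one_add (hpos t ht).ne')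
    (((ContinuousOn.inv₀ (f := fun t => 1 + t) (by fun_prop) fun t ht =>
      (hpos t ht).ne').pow 2).intervalIntegrable)]
  ring

lemma integrableOn_Ioi_one_add_inv_sq {a : ℝ} (ha : -1 < a) :
    IntegrableOn (fun t : ℝ => (1 + t)⁻¹ ^ 2) (Ioi a) :=
  integrableOn_Ioi_deriv_of_nonneg'
    (fun t ht => hasDerivAt_neg_inv_one_add (by linarith [mem_Ici.1 ht]))
    (fun t _ => by positivity) tendsto_neg_inv_one_add_atTop

lemma integral_Ioi_one_add_inv_sq {a : ℝ} (ha : -1 < a) :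
    ∫ t in Ioi a, (1 + t)⁻¹ ^ 2 = (1 + a)⁻¹ := by
  rw [integral_Ioi_of_hasDerivAt_of_nonneg'
    (fun t ht => hasDerivAt_neg_inv_one_add (by linarith [mem_Ici.1 ht]))
    (fun t _ => by positivity) tendsto_neg_inv_one_add_atTop]
  ring

lemma integral_inv_one_add {a b : ℝ} (ha : -1 < a) (hb : -1 < b) :
    ∫ t in a..b, (1 + t)⁻¹ = Real.log ((1 + b) / (1 + a)) := by
  rw [intervalIntegral.integral_comp_add_left (fun t => t⁻¹),
    integral_inv_of_pos (by linarith) (by linarith)]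

lemma lintegral_Ioo_ofReal {f : ℝ → ℝ} {a b : ℝ} (hab : a ≤ b)
    (hf : IntervalIntegrable f volume a b) (hf_nonneg : ∀ t ∈ Ioo a b, 0 ≤ f t) :
    ∫⁻ t in Ioo a b, ENNReal.ofReal (f t) = ENNReal.ofReal (∫ t in a..b, f t) := by
  rw [intervalIntegral.integral_of_le hab, integral_Ioc_eq_integral_Ioo,
    ofReal_integral_eq_lintegral_ofReal (hf.1.mono_set Ioo_subset_Ioc_self)
      ((ae_restrict_iff' measurableSet_Ioo).2 (ae_of_all _ hf_nonneg))]

lemma lintegral_Ioo_two_mul_one_add_inv_sub_sq :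
    ∫⁻ t in Ioo (0 : ℝ) 1, ENNReal.ofReal (2 * (1 + t)⁻¹ - (1 + t)⁻¹ ^ 2)
      = ENNReal.ofReal (2 * Real.log 2 - 1 / 2) := by
  have hcont : ContinuousOn (fun t : ℝ => (1 + t)⁻¹) (uIcc 0 1) :=
    ContinuousOn.inv₀ (f := fun t => 1 + t) (by fun_prop) fun t ht => by
      rw [uIcc_of_le zero_le_one] at ht; linarith [ht.1]
  have hint : IntervalIntegrable (fun t : ℝ => (1 + t)⁻¹) volume 0 1 := hcont.intervalIntegrable
  have hint_sq : IntervalIntegrable (fun t : ℝ => (1 + t)⁻¹ ^ 2) volume 0 1 :=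
    (hcont.pow 2).intervalIntegrable
  rw [lintegral_Ioo_ofReal zero_le_one ((hint.const_mul 2).sub hint_sq),
    intervalIntegral.integral_sub (hint.const_mul 2) hint_sq, intervalIntegral.integral_const_mul,
    integral_inv_one_add (by norm_num) (by norm_num),
    integral_one_add_inv_sq (by norm_num) zero_le_one]
  · norm_num
  · rintro t ⟨ht0, -⟩
    have hp : (1 + t)⁻¹ ≤ 1 := inv_le_one_of_one_le₀ (by linarith)
    nlinarith [inv_pos.2 (by linarith : (0 : ℝ) < 1 + t)]

lemma lintegral_Ici_one_add_inv_sq {a : ℝ} (ha : -1 < a) :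
    ∫⁻ t in Ici a, ENNReal.ofReal ((1 + t)⁻¹ ^ 2) = ENNReal.ofReal (1 + a)⁻¹ := by
  rw [← setLIntegral_congr Ioi_ae_eq_Ici, ← integral_Ioi_one_add_inv_sq ha,
    ofReal_integral_eq_lintegral_ofReal (integrableOn_Ioi_one_add_inv_sq ha)
      (ae_of_all _ fun t => by positivity)]

theorem stmt_16_general {Ω : Type*} [MeasurableSpace Ω] (μ : Measure Ω) [IsProbabilityMeasure μ]
    (X Y : Ω → ℝ) (hX : Measurable X) (hY : Measurable Y)
    (hXnn : ∀ ω, 0 ≤ X ω)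
    (hindep : IndepFun X Y μ)
    (hXtail : ∀ v : ℝ, 0 ≤ v → (μ {ω | v < X ω}).toReal = 1 / (1 + v))
    (hYtail : ∀ v : ℝ, 0 ≤ v → (μ {ω | v < Y ω}).toReal = 1 / (1 + v)) :
    ∫ ω, max (min 1 (X ω)) (max (min 1 (Y ω)) (min (X ω) (Y ω))) ∂μ
      = 2 * Real.log 2 := by
  set Z : Ω → ℝ := fun ω => max (min 1 (X ω)) (max (min 1 (Y ω)) (min (X ω) (Y ω)))
  have hZ_nonneg : ∀ ω, 0 ≤ Z ω := fun ω => (le_min zero_le_one (hXnn ω)).trans (le_max_left _ _)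
  have hZ_meas : Measurable Z :=
    (measurable_const.min hX).max ((measurable_const.min hY).max (hX.min hY))
  have hX_tail : ∀ t, 0 ≤ t → μ.real {ω | t < X ω} = (1 + t)⁻¹ := fun t ht => by
    rw [measureReal_def, hXtail t ht, one_div]
  have hY_tail : ∀ t, 0 ≤ t → μ.real {ω | t < Y ω} = (1 + t)⁻¹ := fun t ht => by
    rw [measureReal_def, hYtail t ht, one_div]
  have hZ_tail_lt : ∀ t ∈ Ioo (0 : ℝ) 1,
      μ {ω | t < Z ω} = ENNReal.ofReal (2 * (1 + t)⁻¹ - (1 + t)⁻¹ ^ 2) := by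
    rintro t ⟨ht0, ht1⟩
    rw [← ofReal_measureReal, hindep.measureReal_lt_max_min_of_lt hY ht1, hX_tail t ht0.le,
      hY_tail t ht0.le]
    congr 1
    ring
  have hZ_tail_ge : ∀ t ∈ Ici (1 : ℝ), μ {ω | t < Z ω} = ENNReal.ofReal ((1 + t)⁻¹ ^ 2) := by
    intro t (ht : 1 ≤ t)
    rw [← ofReal_measureReal, hindep.measureReal_lt_max_min_of_le ht, hX_tail t (by linarith),
      hY_tail t (by linarith), sq]
  rw [integral_eq_lintegral_of_nonneg_ae (ae_of_all _ hZ_nonneg) hZ_meas.aestronglyMeasurable,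
    lintegral_eq_lintegral_meas_lt μ (ae_of_all _ hZ_nonneg) hZ_meas.aemeasurable,
    ← Ioo_union_Ici_eq_Ioi zero_lt_one,
    lintegral_union measurableSet_Ici ((Iio_disjoint_Ici le_rfl).mono_left Ioo_subset_Iio_self),
    setLIntegral_congr_fun measurableSet_Ioo hZ_tail_lt,
    setLIntegral_congr_fun measurableSet_Ici hZ_tail_ge,
    lintegral_Ioo_two_mul_one_add_inv_sub_sq, lintegral_Ici_one_add_inv_sq (by norm_num),
    ← ENNReal.ofReal_add (by linarith [Real.log_two_gt_d9]) (by norm_num),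
    ENNReal.toReal_ofReal (by linarith [Real.log_two_gt_d9])]
  norm_num

/-- **Hartline–Roughgarden example with a single duplicate.**
If `X, Y` are i.i.d. with `P(X > v) = 1/(1+v)` for `v ≥ 0`, then the expected
second-highest value among the three bids `1, X, Y`, namely
`E[max(min(1,X), min(1,Y), min(X,Y))]`, equals `2·ln 2`. -/
theorem stmt_16 {Ω : Type*} [MeasurableSpace Ω] (μ : Measure Ω) [IsProbabilityMeasure μ]
    (X Y : Ω → ℝ) (hX : Measurable X) (hY : Measurable Y)
    (hXnn : ∀ ω, 0 ≤ X ω) (hYnn : ∀ ω, 0 ≤ Y ω)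
    (hindep : IndepFun X Y μ)
    (hXtail : ∀ v : ℝ, 0 ≤ v → (μ {ω | v < X ω}).toReal = 1 / (1 + v))
    (hYtail : ∀ v : ℝ, 0 ≤ v → (μ {ω | v < Y ω}).toReal = 1 / (1 + v)) :
    ∫ ω, max (min 1 (X ω)) (max (min 1 (Y ω)) (min (X ω) (Y ω))) ∂μ
      = 2 * Real.log 2 :=
  stmt_16_general μ X Y hX hY hXnn hindep hXtail hYtail
end

section
/- Let X and Y be independent, identically distributed nonnegative regular random variables. Then E[min(X, Y)] ≥ sup_{q ∈ [0,1]} R_X(q). (The revenue of the second-price auction run on a single bidder and one duplicate of her is at least the optimal monopoly revenue from that bidder; this is the single-bidder case of the comparison between the Vickrey auction with duplicates and the lookahead auction.) -/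
open MeasureTheory ProbabilityTheory

/-- The price of `X` at quantile `q`: `v_X(q) = inf {t ≥ 0 : P(X > t) ≤ q}`. -/
noncomputable def price {Ω : Type*} [MeasurableSpace Ω] (μ : Measure Ω) (X : Ω → ℝ)
    (q : ℝ) : ℝ :=
  sInf {t : ℝ | 0 ≤ t ∧ (μ {ω | t < X ω}).toReal ≤ q}

/-- The revenue curve of `X`: `R_X(q) = q · v_X(q)`. -/
noncomputable def revCurve {Ω : Type*} [MeasurableSpace Ω] (μ : Measure Ω) (X : Ω → ℝ)
    (q : ℝ) : ℝ :=
  q * price μ X q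

/-
Write `G(t) = P(X > t)`. By independence `E[min(X, Y)] = ∫₀^∞ G(t)² dt`, and the layer-cake
formula rewrites this as `∫₀^∞ 2s · |{t > 0 | s < G(t)}| ds ≥ ∫₀¹ 2s · v(s) ds = 2 ∫₀¹ R(s) ds`,
since `(0, v(s)) ⊆ {t > 0 | s < G(t)}`. A concave `R` with `R(0) = 0 ≤ R(1)` lies above the
triangle over `[0, 1]` with apex `(q, R(q))`, whose area is `R(q) / 2`. The expectation is finite
because `t · G(t) ≤ sup R ≤ 2 R(1/2)`.
-/

open Set Filter Topology
open scoped ENNReal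

lemma antitone_setOf_lt {Ω : Type*} (X : Ω → ℝ) : Antitone fun t : ℝ => {ω | t < X ω} :=
  fun _ _ hst _ hω => hst.trans_lt hω

lemma tendsto_measure_lt_atTop {Ω : Type*} [MeasurableSpace Ω] {μ : Measure Ω}
    [IsFiniteMeasure μ] {X : Ω → ℝ} (hX : Measurable X) :
    Tendsto (fun t : ℝ => μ {ω | t < X ω}) atTop (𝓝 0) := by
  have hempty : ⋂ t : ℝ, {ω | t < X ω} = ∅ :=
    eq_empty_of_forall_notMem fun ω hω =>
      lt_irrefl (X ω) (mem_iInter.1 hω (X ω))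
  have := tendsto_measure_iInter_atTop (μ := μ) (s := fun t : ℝ => {ω | t < X ω})
    (fun t => (hX measurableSet_Ioi).nullMeasurableSet)
    (antitone_setOf_lt X) ⟨0, measure_ne_top μ _⟩
  rwa [hempty, measure_empty] at this

lemma ofReal_intervalIntegral_eq_setLIntegral {g : ℝ → ℝ} (hg : Continuous g) {a b : ℝ}
    (hab : a ≤ b) (hg0 : ∀ s ∈ Ioc a b, 0 ≤ g s) :
    ENNReal.ofReal (∫ s in a..b, g s) = ∫⁻ s in Ioc a b, ENNReal.ofReal (g s) := by
  rw [intervalIntegral.integral_of_le hab, ofReal_integral_eq_lintegral_ofReal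
    hg.integrableOn_Ioc ((ae_restrict_iff' measurableSet_Ioc).2 (ae_of_all _ hg0))]

lemma ConcaveOn.mul_le_apply_of_nonneg {D : Set ℝ} {f : ℝ → ℝ} (hf : ConcaveOn ℝ D f)
    {x y t : ℝ} (hx : x ∈ D) (hy : y ∈ D) (hfy : 0 ≤ f y) (ht₀ : 0 ≤ t) (ht₁ : t ≤ 1) :
    t * f x ≤ f (t * x + (1 - t) * y) := by
  have := hf.2 hx hy ht₀ (sub_nonneg.2 ht₁) (add_sub_cancel t 1)
  simp only [smul_eq_mul] at this
  nlinarith [mul_nonneg (sub_nonneg.2 ht₁) hfy]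

namespace ConcaveOn

variable {f : ℝ → ℝ} {q s : ℝ}

lemma div_mul_le_of_mem_Icc (hf : ConcaveOn ℝ (Icc 0 1) f) (h0 : 0 ≤ f 0) (hq : q ∈ Icc 0 1)
    (hq0 : 0 < q) (hs : s ∈ Icc 0 q) : s / q * f q ≤ f s := by
  have := hf.mul_le_apply_of_nonneg hq (left_mem_Icc.2 zero_le_one) h0
    (div_nonneg hs.1 hq0.le) ((div_le_one hq0).2 hs.2)
  rwa [div_mul_cancel₀ s hq0.ne', mul_zero, add_zero] at this

lemma sub_div_sub_mul_le_of_mem_Icc (hf : ConcaveOn ℝ (Icc 0 1) f) (h1 : 0 ≤ f 1)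
    (hq : q ∈ Icc 0 1) (hq1 : q < 1) (hs : s ∈ Icc q 1) : (1 - s) / (1 - q) * f q ≤ f s := by
  have h1q : 0 < 1 - q := sub_pos.2 hq1
  have := hf.mul_le_apply_of_nonneg hq (right_mem_Icc.2 zero_le_one) h1
    (div_nonneg (sub_nonneg.2 hs.2) h1q.le) ((div_le_one h1q).2 (by linarith [hs.1]))
  have hs_eq : (1 - s) / (1 - q) * q + (1 - (1 - s) / (1 - q)) * 1 = s := by
    field_simp
    ring
  rwa [hs_eq] at this

lemma apply_le_two_mul_apply_half (hf : ConcaveOn ℝ (Icc 0 1) f) (h0 : 0 ≤ f 0) (h1 : 0 ≤ f 1)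
    (hq : q ∈ Icc 0 1) : f q ≤ 2 * f (1 / 2) := by
  have hhalf : (1 / 2 : ℝ) ∈ Icc 0 1 := ⟨by norm_num, by norm_num⟩
  have hf_half : 0 ≤ f (1 / 2) := by
    have := hf.div_mul_le_of_mem_Icc h0 (right_mem_Icc.2 zero_le_one) one_pos hhalf
    nlinarith
  rcases le_or_gt (f q) 0 with hfq | hfq
  · linarith
  rcases le_or_gt q (1 / 2) with hq_half | hq_half
  · have := hf.sub_div_sub_mul_le_of_mem_Icc h1 hq (by linarith) ⟨hq_half, hhalf.2⟩
    rw [show (1 : ℝ) - 1 / 2 = 1 / 2 by norm_num] at this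
    have : 1 / 2 * f q ≤ 1 / 2 / (1 - q) * f q :=
      mul_le_mul_of_nonneg_right (le_div_self (by norm_num) (by linarith) (by linarith [hq.1]))
        hfq.le
    linarith
  · have := hf.div_mul_le_of_mem_Icc h0 hq (by linarith) ⟨hhalf.1, hq_half.le⟩
    have : 1 / 2 * f q ≤ 1 / 2 / q * f q :=
      mul_le_mul_of_nonneg_right (le_div_self (by norm_num) (by linarith) hq.2) hfq.le
    linarith

lemma ofReal_mul_le_setLIntegral_Ioc_left (hf : ConcaveOn ℝ (Icc 0 1) f) (h0 : 0 ≤ f 0)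
    (hq : q ∈ Icc 0 1) (hfq : 0 ≤ f q) :
    ENNReal.ofReal (q * f q) ≤ ∫⁻ s in Ioc 0 q, ENNReal.ofReal (2 * f s) := by
  rcases hq.1.eq_or_lt with rfl | hq0
  · simp
  have hc : 0 ≤ 2 * f q / q := by positivity
  calc ENNReal.ofReal (q * f q) = ENNReal.ofReal (∫ s in 0..q, 2 * f q / q * s) := by
        rw [intervalIntegral.integral_const_mul, integral_id]
        congr 1
        field_simp
        ring
    _ = ∫⁻ s in Ioc 0 q, ENNReal.ofReal (2 * f q / q * s) :=
        ofReal_intervalIntegral_eq_setLIntegral (by fun_prop) hq0.le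
          fun s hs => mul_nonneg hc hs.1.le
    _ ≤ ∫⁻ s in Ioc 0 q, ENNReal.ofReal (2 * f s) := by
        refine setLIntegral_mono' measurableSet_Ioc fun s hs => ENNReal.ofReal_le_ofReal ?_
        have := hf.div_mul_le_of_mem_Icc h0 hq hq0 (Ioc_subset_Icc_self hs)
        linarith [show 2 * f q / q * s = 2 * (s / q * f q) by ring]

lemma ofReal_mul_le_setLIntegral_Ioc_right (hf : ConcaveOn ℝ (Icc 0 1) f) (h1 : 0 ≤ f 1)
    (hq : q ∈ Icc 0 1) (hfq : 0 ≤ f q) :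
    ENNReal.ofReal ((1 - q) * f q) ≤ ∫⁻ s in Ioc q 1, ENNReal.ofReal (2 * f s) := by
  rcases hq.2.eq_or_lt with rfl | hq1
  · simp
  have h1q : 0 < 1 - q := sub_pos.2 hq1
  have hc : 0 ≤ 2 * f q / (1 - q) := by positivity
  calc ENNReal.ofReal ((1 - q) * f q)
        = ENNReal.ofReal (∫ s in q..1, 2 * f q / (1 - q) * (1 - s)) := by
        rw [intervalIntegral.integral_const_mul,
          intervalIntegral.integral_comp_sub_left (fun x => x), integral_id]
        congr 1
        field_simp
        ring
    _ = ∫⁻ s in Ioc q 1, ENNReal.ofReal (2 * f q / (1 - q) * (1 - s)) :=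
        ofReal_intervalIntegral_eq_setLIntegral (by fun_prop) hq1.le
          fun s hs => mul_nonneg hc (sub_nonneg.2 hs.2)
    _ ≤ ∫⁻ s in Ioc q 1, ENNReal.ofReal (2 * f s) := by
        refine setLIntegral_mono' measurableSet_Ioc fun s hs => ENNReal.ofReal_le_ofReal ?_
        have := hf.sub_div_sub_mul_le_of_mem_Icc h1 hq hq1 (Ioc_subset_Icc_self hs)
        linarith [show 2 * f q / (1 - q) * (1 - s) = 2 * ((1 - s) / (1 - q) * f q) by ring]

lemma ofReal_apply_le_setLIntegral (hf : ConcaveOn ℝ (Icc 0 1) f) (h0 : 0 ≤ f 0) (h1 : 0 ≤ f 1)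
    (hq : q ∈ Icc 0 1) : ENNReal.ofReal (f q) ≤ ∫⁻ s in Ioc 0 1, ENNReal.ofReal (2 * f s) := by
  rcases le_or_gt (f q) 0 with hfq | hfq
  · simp [ENNReal.ofReal_of_nonpos hfq]
  calc ENNReal.ofReal (f q) = ENNReal.ofReal (q * f q) + ENNReal.ofReal ((1 - q) * f q) := by
        rw [← ENNReal.ofReal_add (mul_nonneg hq.1 hfq.le) (mul_nonneg (sub_nonneg.2 hq.2) hfq.le)]
        ring_nf
    _ ≤ (∫⁻ s in Ioc 0 q, ENNReal.ofReal (2 * f s)) + ∫⁻ s in Ioc q 1, ENNReal.ofReal (2 * f s) :=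
        add_le_add (hf.ofReal_mul_le_setLIntegral_Ioc_left h0 hq hfq.le)
          (hf.ofReal_mul_le_setLIntegral_Ioc_right h1 hq hfq.le)
    _ = ∫⁻ s in Ioc 0 1, ENNReal.ofReal (2 * f s) := by
        rw [← lintegral_union measurableSet_Ioc (Ioc_disjoint_Ioc_of_le le_rfl),
          Ioc_union_Ioc_eq_Ioc hq.1 hq.2]

end ConcaveOn

section Price

variable {Ω : Type*} [MeasurableSpace Ω] {μ : Measure Ω} {X : Ω → ℝ}

lemma price_nonneg (q : ℝ) : 0 ≤ price μ X q :=
  Real.sInf_nonneg fun _ ht => ht.1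

lemma revCurve_zero : revCurve μ X 0 = 0 := zero_mul _

lemma revCurve_one_nonneg : 0 ≤ revCurve μ X 1 :=
  mul_nonneg zero_le_one (price_nonneg 1)

lemma lt_measure_of_lt_price {q t : ℝ} (ht : 0 ≤ t) (h : t < price μ X q) :
    q < (μ {ω | t < X ω}).toReal := by
  by_contra! hle
  exact (csInf_le (s := {t : ℝ | 0 ≤ t ∧ (μ {ω | t < X ω}).toReal ≤ q})
    ⟨0, fun _ hs => hs.1⟩ ⟨ht, hle⟩).not_gt h

variable [IsFiniteMeasure μ]

lemma le_price_of_lt_measure (hX : Measurable X) {q t : ℝ} (hq : 0 < q)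
    (h : q < (μ {ω | t < X ω}).toReal) : t ≤ price μ X q := by
  obtain ⟨t₀, ht₀, hμt₀⟩ := ((eventually_ge_atTop 0).and
    ((tendsto_measure_lt_atTop (μ := μ) hX).eventually
      (eventually_le_nhds (ENNReal.ofReal_pos.2 hq)))).exists
  refine le_csInf ⟨t₀, ht₀, ENNReal.toReal_le_of_le_ofReal hq.le hμt₀⟩ fun s hs => ?_
  by_contra! hst
  have := ENNReal.toReal_mono (measure_ne_top μ _) (measure_mono (antitone_setOf_lt X hst.le))
  linarith [hs.2]

lemma lintegral_revCurve_le :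
    ∫⁻ s in Ioc 0 1, ENNReal.ofReal (2 * revCurve μ X s) ≤ ∫⁻ t in Ioi 0, μ {ω | t < X ω} ^ 2 := by
  set G : ℝ → ℝ := fun t => (μ {ω | t < X ω}).toReal
  have hG : Antitone G := fun _ _ hst =>
    ENNReal.toReal_mono (measure_ne_top μ _) (measure_mono (antitone_setOf_lt X hst))
  -- layer cake for `G` on `(0, ∞)` with weight `2s`: `∫ G² = ∫ 2s · |{t > 0 | s < G t}| ds`
  have layer := lintegral_comp_eq_lintegral_meas_lt_mul (volume.restrict (Ioi 0)) (f := G)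
    (g := fun s => 2 * s) (ae_of_all _ fun _ => ENNReal.toReal_nonneg) hG.measurable.aemeasurable
    (fun _ _ => (continuous_const.mul continuous_id).intervalIntegrable _ _)
    ((ae_restrict_iff' measurableSet_Ioi).2 (ae_of_all _ fun s (hs : 0 < s) => by positivity))
  have hsq : ∀ t, ENNReal.ofReal (∫ s in 0..G t, 2 * s) = μ {ω | t < X ω} ^ 2 := fun t => by
    rw [intervalIntegral.integral_const_mul, integral_id,
      ← ENNReal.ofReal_toReal (ENNReal.pow_ne_top (measure_ne_top μ _)), ENNReal.toReal_pow]
    congr 1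
    ring
  have hslice : ∀ s ∈ Ioi (0 : ℝ), ENNReal.ofReal (2 * revCurve μ X s) ≤
      volume.restrict (Ioi 0) {t | s < G t} * ENNReal.ofReal (2 * s) := by
    intro s hs
    have hsub : Ioo 0 (price μ X s) ⊆ {t | s < G t} ∩ Ioi 0 :=
      fun t ht => ⟨lt_measure_of_lt_price ht.1.le ht.2, ht.1⟩
    calc ENNReal.ofReal (2 * revCurve μ X s)
        = volume (Ioo 0 (price μ X s)) * ENNReal.ofReal (2 * s) := by
          rw [Real.volume_Ioo, sub_zero, ← ENNReal.ofReal_mul (price_nonneg s), revCurve]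
          ring_nf
      _ ≤ volume.restrict (Ioi 0) {t | s < G t} * ENNReal.ofReal (2 * s) := by
          gcongr ?_ * _
          exact (measure_mono hsub).trans (Measure.le_restrict_apply _ _)
  calc ∫⁻ s in Ioc 0 1, ENNReal.ofReal (2 * revCurve μ X s)
      ≤ ∫⁻ s in Ioi 0, ENNReal.ofReal (2 * revCurve μ X s) := lintegral_mono_set Ioc_subset_Ioi_self
    _ ≤ ∫⁻ s in Ioi 0, volume.restrict (Ioi 0) {t | s < G t} * ENNReal.ofReal (2 * s) :=
        setLIntegral_mono' measurableSet_Ioi hslice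
    _ = ∫⁻ t in Ioi 0, μ {ω | t < X ω} ^ 2 := by simp only [← layer, hsq]

end Price

section Tail

variable {Ω : Type*} [MeasurableSpace Ω] {μ : Measure Ω} [IsProbabilityMeasure μ] {X : Ω → ℝ}

lemma mul_measure_lt_le (hX : Measurable X) {C : ℝ}
    (hC : ∀ q ∈ Icc (0 : ℝ) 1, revCurve μ X q ≤ C) {t : ℝ} (ht : 0 ≤ t) :
    t * (μ {ω | t < X ω}).toReal ≤ C := by
  have hC0 : 0 ≤ C := revCurve_zero (μ := μ) (X := X) ▸ hC 0 (left_mem_Icc.2 zero_le_one)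
  rcases ht.eq_or_lt with rfl | ht
  · simpa using hC0
  rw [← le_div_iff₀' ht]
  refine le_of_forall_lt_imp_le_of_dense fun q hq => ?_
  rcases le_or_gt q 0 with hq0 | hq0
  · exact hq0.trans (div_nonneg hC0 ht.le)
  have hq1 : q ≤ 1 := hq.le.trans measureReal_le_one
  rw [le_div_iff₀ ht]
  calc q * t ≤ q * price μ X q := by gcongr; exact le_price_of_lt_measure hX hq0 hq
    _ ≤ C := hC q ⟨hq0.le, hq1⟩

lemma lintegral_measure_lt_sq_lt_top (hX : Measurable X) {C : ℝ}
    (hC : ∀ q ∈ Icc (0 : ℝ) 1, revCurve μ X q ≤ C) :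
    ∫⁻ t in Ioi 0, μ {ω | t < X ω} ^ 2 < ∞ := by
  -- `t * P(X > t) ≤ C` and `P(X > t) ≤ 1` give `P(X > t)² * (1 + t²) ≤ 1 + C²`
  have hbound : ∀ t ∈ Ioi (0 : ℝ),
      μ {ω | t < X ω} ^ 2 ≤ ENNReal.ofReal ((1 + C ^ 2) * (1 + t ^ 2)⁻¹) := by
    intro t ht
    set g := (μ {ω | t < X ω}).toReal
    have hg0 : 0 ≤ g := ENNReal.toReal_nonneg
    have hg1 : g ≤ 1 := measureReal_le_one
    have htg : t * g ≤ C := mul_measure_lt_le hX hC (le_of_lt ht)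
    have htg0 : 0 ≤ t * g := mul_nonneg (le_of_lt ht) hg0
    rw [ENNReal.le_ofReal_iff_toReal_le (by simp) (by positivity), ENNReal.toReal_pow,
      ← div_eq_mul_inv, le_div_iff₀ (by positivity)]
    nlinarith
  calc ∫⁻ t in Ioi 0, μ {ω | t < X ω} ^ 2
      ≤ ∫⁻ t in Ioi 0, ENNReal.ofReal ((1 + C ^ 2) * (1 + t ^ 2)⁻¹) :=
        setLIntegral_mono' measurableSet_Ioi hbound
    _ ≤ ∫⁻ t, ENNReal.ofReal ((1 + C ^ 2) * (1 + t ^ 2)⁻¹) := setLIntegral_le_lintegral _ _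
    _ < ∞ := (integrable_inv_one_add_sq.const_mul _).lintegral_lt_top

end Tail

lemma lintegral_ofReal_min_eq {Ω : Type*} [MeasurableSpace Ω] {μ : Measure Ω} {X Y : Ω → ℝ}
    (hX : Measurable X) (hY : Measurable Y) (hXnn : ∀ ω, 0 ≤ X ω) (hYnn : ∀ ω, 0 ≤ Y ω)
    (hindep : IndepFun X Y μ) (hid : IdentDistrib X Y μ μ) :
    ∫⁻ ω, ENNReal.ofReal (min (X ω) (Y ω)) ∂μ = ∫⁻ t in Ioi 0, μ {ω | t < X ω} ^ 2 := by
  rw [lintegral_eq_lintegral_meas_lt μ (ae_of_all _ fun ω => le_min (hXnn ω) (hYnn ω))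
    (hX.min hY).aemeasurable]
  refine lintegral_congr fun t => ?_
  have hmin : {ω | t < min (X ω) (Y ω)} = X ⁻¹' Ioi t ∩ Y ⁻¹' Ioi t := by
    ext ω
    simp
  rw [hmin, hindep.measure_inter_preimage_eq_mul _ _ measurableSet_Ioi measurableSet_Ioi,
    ← hid.measure_mem_eq measurableSet_Ioi, sq]
  rfl

/-- **Single-bidder Bulow–Klemperer.** For `X, Y` i.i.d. nonnegative and regular
(concave revenue curve), the expected revenue `E[min(X,Y)]` of the second-price
auction on a bidder and her duplicate is at least the optimal monopoly revenue
`sup_{q ∈ [0,1]} R_X(q)`. -/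
theorem stmt_18 {Ω : Type*} [MeasurableSpace Ω] (μ : Measure Ω) [IsProbabilityMeasure μ]
    (X Y : Ω → ℝ) (hX : Measurable X) (hY : Measurable Y)
    (hXnn : ∀ ω, 0 ≤ X ω) (hYnn : ∀ ω, 0 ≤ Y ω)
    (hindep : IndepFun X Y μ)
    (hid : IdentDistrib X Y μ μ)
    (hreg : ConcaveOn ℝ (Set.Icc (0:ℝ) 1) (revCurve μ X)) :
    sSup (revCurve μ X '' Set.Icc (0:ℝ) 1) ≤ ∫ ω, min (X ω) (Y ω) ∂μ := by
  have h0 : 0 ≤ revCurve μ X 0 := revCurve_zero.ge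
  have h1 : 0 ≤ revCurve μ X 1 := revCurve_one_nonneg
  have hmin := lintegral_ofReal_min_eq hX hY hXnn hYnn hindep hid
  have hfin : ∫⁻ ω, ENNReal.ofReal (min (X ω) (Y ω)) ∂μ ≠ ∞ := hmin ▸
    (lintegral_measure_lt_sq_lt_top hX fun _ hq => hreg.apply_le_two_mul_apply_half h0 h1 hq).ne
  have hmin_nn : ∀ ω, 0 ≤ min (X ω) (Y ω) := fun ω => le_min (hXnn ω) (hYnn ω)
  refine Real.sSup_le ?_ (integral_nonneg hmin_nn)
  rintro _ ⟨q, hq, rfl⟩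
  rw [integral_eq_lintegral_of_nonneg_ae (ae_of_all _ hmin_nn)
    (hX.min hY).aestronglyMeasurable, ← ENNReal.ofReal_le_iff_le_toReal hfin, hmin]
  exact (hreg.ofReal_apply_le_setLIntegral h0 h1 hq).trans lintegral_revCurve_le
end

section
/- Let X_1, X_2 be i.i.d. nonnegative random variables with P(X_1 > v) = 1/(1 + v) for all v ≥ 0, and let Y_1, Y_2, Y_3, Y_4 be i.i.d. random variables each distributed as min(W, 1), where W satisfies P(W > v) = 1/(1 + v) for all v ≥ 0; suppose all six random variables X_1, X_2, Y_1, Y_2, Y_3, Y_4 are mutually independent. Then the expected second-highest value among the six is strictly less than 3/2. (Since the ex ante optimal revenue of the three original bidders — one slanted equal-revenue bidder and two bidders with triangle revenue curves peaking at (1/2, 1/2) — equals 2, this shows the Vickrey auction with all bidders duplicated does not 4/3-approximate the ex ante optimal revenue for n = 3.) -/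
/-!
Because the four capped bidders never exceed `1`, the second-highest value is at most
`max (min X₁ X₂) 1`. The minimum of the two independent slanted equal-revenue values has tail
`1 / (1 + v) ^ 2`, so by the layer-cake formula
`E[max (min X₁ X₂) 1] = 1 + ∫₀^∞ dt / (2 + t) ^ 2 = 3 / 2`. Strictness: with positive
probability `(1 / 3) ^ 6` all six values are at most `1 / 2`, and there the second-highest value
falls short of `max (min X₁ X₂) 1 ≥ 1` by at least `1 / 2`.
-/

open MeasureTheory ProbabilityTheory

noncomputable def secondHighest {I : Type*} (x : I → ℝ) : ℝ :=
  ⨆ p : {p : I × I // p.1 ≠ p.2}, min (x p.1.1) (x p.1.2)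

open Set Filter Topology

section SecondHighest

variable {I : Type*} {x : I → ℝ}

lemma secondHighest_nonneg (hx : ∀ i, 0 ≤ x i) : 0 ≤ secondHighest x :=
  Real.iSup_nonneg fun _ => le_min (hx _) (hx _)

lemma secondHighest_le_of_forall_le {c : ℝ} (hc : 0 ≤ c) (hx : ∀ i, x i ≤ c) :
    secondHighest x ≤ c :=
  Real.iSup_le (fun _ => (min_le_left _ _).trans (hx _)) hc

lemma secondHighest_le_max_min {i₀ i₁ : I} (h01 : i₀ ≠ i₁) {c : ℝ}
    (hx : ∀ i, i ≠ i₀ → i ≠ i₁ → x i ≤ c) :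
    secondHighest x ≤ max (min (x i₀) (x i₁)) c := by
  have : Nonempty {p : I × I // p.1 ≠ p.2} := ⟨⟨(i₀, i₁), h01⟩⟩
  refine ciSup_le fun ⟨(i, j), hij⟩ => ?_
  by_cases hi : i ≠ i₀ ∧ i ≠ i₁
  · exact le_max_of_le_right ((min_le_left _ _).trans (hx i hi.1 hi.2))
  by_cases hj : j ≠ i₀ ∧ j ≠ i₁
  · exact le_max_of_le_right ((min_le_right _ _).trans (hx j hj.1 hj.2))
  refine le_max_of_le_left (le_of_eq ?_)
  simp only [ne_eq, not_and_or, not_not] at hi hj hij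
  rcases hi with rfl | rfl <;> rcases hj with rfl | rfl
  all_goals first | exact absurd rfl hij | simp [min_comm]

end SecondHighest

lemma integral_Ioi_one_div_add_sq {a : ℝ} (ha : 0 < a) :
    IntegrableOn (fun t : ℝ => 1 / (a + t) ^ 2) (Ioi 0) ∧
      ∫ t in Ioi (0 : ℝ), 1 / (a + t) ^ 2 = 1 / a := by
  have hderiv :
      ∀ x ∈ Ici (0 : ℝ), HasDerivAt (fun t => -(a + t)⁻¹) (1 / (a + x) ^ 2) x := by
    intro x hx
    have hx0 : a + x ≠ 0 := by simp only [mem_Ici] at hx; positivity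
    exact (((hasDerivAt_id x).const_add a).inv hx0).neg.congr_deriv (by simp [neg_div])
  have hpos : ∀ x ∈ Ioi (0 : ℝ), 0 ≤ 1 / (a + x) ^ 2 := fun x _ => by positivity
  have htend : Tendsto (fun t => -(a + t)⁻¹) atTop (𝓝 0) := by
    simpa using (tendsto_inv_atTop_zero.comp (tendsto_atTop_add_const_left _ a tendsto_id)).neg
  refine ⟨integrableOn_Ioi_deriv_of_nonneg' hderiv hpos htend, ?_⟩
  rw [integral_Ioi_of_hasDerivAt_of_nonneg' hderiv hpos htend]
  simp

section

variable {Ω : Type*} [MeasurableSpace Ω] {μ : Measure Ω}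

lemma integral_eq_one_div_of_measureReal_lt [IsFiniteMeasure μ] {f : Ω → ℝ}
    (hf : Measurable f) (hf_nn : 0 ≤ f) {a : ℝ} (ha : 0 < a)
    (htail : ∀ t, 0 < t → μ.real {ω | t < f ω} = 1 / (a + t) ^ 2) :
    Integrable f μ ∧ ∫ ω, f ω ∂μ = 1 / a := by
  obtain ⟨hint, hval⟩ := integral_Ioi_one_div_add_sq ha
  have hlint : ∫⁻ ω, ENNReal.ofReal (f ω) ∂μ = ENNReal.ofReal (1 / a) := by
    rw [lintegral_eq_lintegral_meas_lt μ (ae_of_all _ hf_nn) hf.aemeasurable, ← hval,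
      ofReal_integral_eq_lintegral_ofReal hint (ae_of_all _ fun t => by positivity)]
    refine setLIntegral_congr_fun measurableSet_Ioi fun t ht => ?_
    rw [← htail t ht, ofReal_measureReal]
  have hfint : Integrable f μ :=
    ⟨hf.aestronglyMeasurable, (hasFiniteIntegral_iff_ofReal (ae_of_all _ hf_nn)).2
      (hlint ▸ ENNReal.ofReal_lt_top)⟩
  refine ⟨hfint, ?_⟩
  rw [integral_eq_lintegral_of_nonneg_ae (ae_of_all _ hf_nn) hf.aestronglyMeasurable, hlint,
    ENNReal.toReal_ofReal (by positivity)]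

namespace ProbabilityTheory

lemma IndepFun.measureReal_lt_min {X Y : Ω → ℝ} (h : IndepFun X Y μ) (v : ℝ) :
    μ.real {ω | v < min (X ω) (Y ω)} = μ.real {ω | v < X ω} * μ.real {ω | v < Y ω} := by
  have hset : {ω | v < min (X ω) (Y ω)} = X ⁻¹' Ioi v ∩ Y ⁻¹' Ioi v := by
    ext ω; simp
  rw [hset, measureReal_def,
    h.measure_inter_preimage_eq_mul _ _ measurableSet_Ioi measurableSet_Ioi, ENNReal.toReal_mul]
  rfl

lemma iIndepFun.measureReal_iInter_preimage {ι : Type*} [Fintype ι] {X : ι → Ω → ℝ}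
    (h : iIndepFun X μ) {s : ι → Set ℝ} (hs : ∀ i, MeasurableSet (s i)) :
    μ.real (⋂ i, X i ⁻¹' s i) = ∏ i, μ.real (X i ⁻¹' s i) := by
  have := h.measure_inter_preimage_eq_mul Finset.univ (fun i _ => hs i)
  simp only [Finset.mem_univ, iInter_true] at this
  rw [measureReal_def, this, ENNReal.toReal_prod]
  rfl

lemma iIndepFun.measureReal_iInter_preimage_Iic_pos [IsProbabilityMeasure μ] {ι : Type*}
    [Fintype ι] {X : ι → Ω → ℝ} (h : iIndepFun X μ) (hX : ∀ i, Measurable (X i)) {c : ℝ}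
    (hc : ∀ i, μ.real {ω | c < X i ω} < 1) :
    0 < μ.real (⋂ i, X i ⁻¹' Iic c) := by
  rw [h.measureReal_iInter_preimage fun _ => measurableSet_Iic]
  refine Finset.prod_pos fun i _ => ?_
  rw [← compl_Ioi, preimage_compl, probReal_compl_eq_one_sub (hX i measurableSet_Ioi)]
  exact sub_pos.2 (hc i)

lemma IndepFun.integral_max_min_one_sub_one [IsFiniteMeasure μ] {X Y : Ω → ℝ}
    (hXY : IndepFun X Y μ) (hX : Measurable X) (hcapped : Measurable Y)
    (hX_tail : ∀ v, 0 ≤ v → μ.real {ω | v < X ω} = 1 / (1 + v))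
    (hY_tail : ∀ v, 0 ≤ v → μ.real {ω | v < Y ω} = 1 / (1 + v)) :
    Integrable (fun ω => max (min (X ω) (Y ω)) 1 - 1) μ ∧
      ∫ ω, max (min (X ω) (Y ω)) 1 - 1 ∂μ = 1 / 2 := by
  refine integral_eq_one_div_of_measureReal_lt (((hX.min hcapped).max measurable_const).sub_const 1)
    (fun ω => sub_nonneg.2 (le_max_right _ _)) two_pos fun t ht => ?_
  have hset : {ω | t < max (min (X ω) (Y ω)) 1 - 1} = {ω | 1 + t < min (X ω) (Y ω)} := by
    ext ω
    change t < max (min (X ω) (Y ω)) 1 - 1 ↔ 1 + t < min (X ω) (Y ω)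
    rw [lt_sub_iff_add_lt', lt_max_iff, or_iff_left (by linarith)]
  rw [hset, hXY.measureReal_lt_min, hX_tail _ (by positivity), hY_tail _ (by positivity),
    ← one_div_pow, sq]
  ring

end ProbabilityTheory

end

/-- **The Vickrey auction with all bidders duplicated does not `4/3`-approximate the ex
ante optimal revenue for `n = 3`.** `Z 0, Z 1` are i.i.d. slanted equal-revenue bidders
(`P(Z > v) = 1/(1+v)` for `v ≥ 0`) — an original bidder and her duplicate — and
`Z 2, …, Z 5` are i.i.d. distributed as `min(W, 1)` for `W` slanted equal-revenue
(`P(Z > v) = 1/(1+v)` for `0 ≤ v < 1`, and `P(Z > v) = 0` for `v ≥ 1`) — two original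
bidders and their duplicates; all six are mutually independent. The expected
second-highest value among the six is strictly less than `3/2`, while the ex ante
optimal revenue of the three original bidders is `2`. -/
theorem stmt_19 {Ω : Type*} [MeasurableSpace Ω] (μ : Measure Ω) [IsProbabilityMeasure μ]
    (Z : Fin 6 → Ω → ℝ)
    (hmeas : ∀ i, Measurable (Z i))
    (hnn : ∀ i ω, 0 ≤ Z i ω)
    (hindep : iIndepFun Z μ)
    (hslanted : ∀ i : Fin 6, i.val < 2 →
      ∀ v : ℝ, 0 ≤ v → (μ {ω | v < Z i ω}).toReal = 1 / (1 + v))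
    (htriangle : ∀ i : Fin 6, 2 ≤ i.val →
      (∀ v : ℝ, 0 ≤ v → v < 1 → (μ {ω | v < Z i ω}).toReal = 1 / (1 + v)) ∧
      (∀ v : ℝ, 1 ≤ v → μ {ω | v < Z i ω} = 0)) :
    ∫ ω, secondHighest (fun i => Z i ω) ∂μ < 3/2 := by
  obtain ⟨hM_sub_int, hM⟩ :=
    (hindep.indepFun (by decide : (0 : Fin 6) ≠ 1)).integral_max_min_one_sub_one (hmeas 0)
      (hmeas 1) (hslanted 0 (by decide)) (hslanted 1 (by decide))
  set M : Ω → ℝ := fun ω => max (min (Z 0 ω) (Z 1 ω)) 1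
  set A : Set Ω := ⋂ i, Z i ⁻¹' Iic (1 / 2)
  have hA_meas : MeasurableSet A := .iInter fun i => hmeas i measurableSet_Iic
  have hA : 0 < μ.real A := hindep.measureReal_iInter_preimage_Iic_pos hmeas fun i => by
    rcases lt_or_ge i.val 2 with hi | hi
    · exact (hslanted i hi _ (by norm_num)).trans_lt (by norm_num)
    · exact ((htriangle i hi).1 _ (by norm_num) (by norm_num)).trans_lt (by norm_num)
  have hcapped : ∀ᵐ ω ∂μ, ∀ i : Fin 6, i ≠ 0 → i ≠ 1 → Z i ω ≤ 1 := by
    refine ae_all_iff.2 fun i => ?_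
    by_cases hi : 2 ≤ i.val
    · filter_upwards [measure_eq_zero_iff_ae_notMem.1 ((htriangle i hi).2 1 le_rfl)]
        with ω hω _ _ using not_lt.1 hω
    · exact ae_of_all _ fun ω h0 h1 => (hi (by omega)).elim
  have hbound :
      ∀ᵐ ω ∂μ, secondHighest (fun i => Z i ω) ≤ M ω - A.indicator (fun _ => 1 / 2) ω := by
    filter_upwards [hcapped] with ω hω
    by_cases hωA : ω ∈ A
    · rw [indicator_of_mem hωA]
      linarith [le_max_right (min (Z 0 ω) (Z 1 ω)) 1,
        secondHighest_le_of_forall_le (by norm_num) fun i => mem_iInter.1 hωA i]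
    · rw [indicator_of_notMem hωA, sub_zero]
      exact secondHighest_le_max_min (by decide) hω
  have hA_int : Integrable (A.indicator fun _ => (1 : ℝ) / 2) μ :=
    (integrable_const _).indicator hA_meas
  have hM_add_int : Integrable (fun ω => M ω - 1 + 1) μ := hM_sub_int.add (integrable_const 1)
  calc ∫ ω, secondHighest (fun i => Z i ω) ∂μ
      ≤ ∫ ω, (M ω - 1) + 1 - A.indicator (fun _ => 1 / 2) ω ∂μ :=
        integral_mono_of_nonneg (ae_of_all _ fun ω => secondHighest_nonneg (hnn · ω))
          (hM_add_int.sub hA_int) (hbound.mono fun ω h => h.trans_eq (by ring))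
    _ = 3 / 2 - μ.real A / 2 := by
        rw [integral_sub hM_add_int hA_int, integral_add hM_sub_int (integrable_const 1), hM,
          integral_const, integral_indicator_const _ hA_meas]
        simp only [probReal_univ, smul_eq_mul]
        ring
    _ < 3 / 2 := by linarith
end
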